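/- Let A be a q-positive subset of an SSD space B. Then conv A ⊆ dom Φ_A^@ ⊆ cl_w(conv A), where conv A is the convex hull of A, dom Φ_A^@ = {b ∈ B : Φ_A^@(b) < +∞}, and cl_w denotes closure in the w(B,B) topology. -/

import Mathlib

/-!
Every `a ∈ A` satisfies `Φ_A^@(a) ≤ q(a)`, and the domain of an intrinsic conjugate is convex
as a supremum of affine functions, so it contains `conv A`. Conversely, if `b` lies outside the
weak closure of `conv A`, a weakly continuous functional `⌊·,y⌋` separates them:
`⌊a,y⌋ ≤ u < ⌊b,y⌋` for `a ∈ A`. For `a₀ ∈ A`, `q`-positivity gives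
`Φ_A(a₀ + t y) ≤ q(a₀) + t u`, so `Φ_A^@(b) ≥ ⌊a₀,b⌋ - q(a₀) + t (⌊b,y⌋ - u)` for all `t ≥ 0`,
and `Φ_A^@(b) = +∞`.
-/
noncomputable section

variable {B : Type*} [AddCommGroup B] [Module ℝ B]

/-- The quadratic form `q(x) = ½⌊x,x⌋` associated to the bilinear form `br`. -/
def qQ (br : B →ₗ[ℝ] B →ₗ[ℝ] ℝ) (x : B) : ℝ := (1 / 2) * br x x

/-- `A` is `q`-positive: nonempty and `q(b - c) ≥ 0` for all `b, c ∈ A`. -/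
def IsQPositive (br : B →ₗ[ℝ] B →ₗ[ℝ] ℝ) (A : Set B) : Prop :=
  A.Nonempty ∧ ∀ b ∈ A, ∀ c ∈ A, 0 ≤ qQ br (b - c)

/-- `A^π`, the set of points `q`-positively related to `A`. -/
def qPi (br : B →ₗ[ℝ] B →ₗ[ℝ] ℝ) (A : Set B) : Set B :=
  {b : B | ∀ a ∈ A, 0 ≤ qQ br (b - a)}

/-- `A` is maximally `q`-positive. -/
def IsMaxQPositive (br : B →ₗ[ℝ] B →ₗ[ℝ] ℝ) (A : Set B) : Prop :=
  IsQPositive br A ∧ ∀ C : Set B, IsQPositive br C → A ⊆ C → C = A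

/-- The generalized Fitzpatrick function `Φ_A(x) = sup_{a ∈ A} (⌊x,a⌋ - q(a))`. -/
def PhiF (br : B →ₗ[ℝ] B →ₗ[ℝ] ℝ) (A : Set B) (x : B) : EReal :=
  ⨆ a ∈ A, ((br x a - qQ br a : ℝ) : EReal)

/-- The intrinsic conjugate `f^@(b) = sup_{c ∈ B} (⌊c,b⌋ - f(c))`. -/
def intrinsicConj (br : B →ₗ[ℝ] B →ₗ[ℝ] ℝ) (f : B → EReal) (b : B) : EReal :=
  ⨆ c : B, ((br c b : ℝ) : EReal) - f c

/-- `P_q(f) = {b : f(b) = q(b)}`. -/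
def PqSet (br : B →ₗ[ℝ] B →ₗ[ℝ] ℝ) (f : B → EReal) : Set B :=
  {b : B | f b = ((qQ br b : ℝ) : EReal)}

/-- `G_f = {b : f(b) + f^@(b) = ⌊b,b⌋}`. -/
def GSet (br : B →ₗ[ℝ] B →ₗ[ℝ] ℝ) (f : B → EReal) : Set B :=
  {b : B | f b + intrinsicConj br f b = ((br b b : ℝ) : EReal)}

/-- Convexity for `ℝ ∪ {+∞}`-valued functions. -/
def ConvexE (f : B → EReal) : Prop :=
  ∀ x y : B, ∀ α β : ℝ, 0 ≤ α → 0 ≤ β → α + β = 1 →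
    f (α • x + β • y) ≤ (α : EReal) * f x + (β : EReal) * f y

/-- The weak topology `w(B,B)` induced by the functionals `⌊·,b⌋`, `b ∈ B`. -/
def weakTop (br : B →ₗ[ℝ] B →ₗ[ℝ] ℝ) : TopologicalSpace B :=
  ⨅ b : B, TopologicalSpace.induced (fun x => br x b) inferInstance

/-- Lower semicontinuity with respect to the weak topology `w(B,B)`. -/
def LscW (br : B →ₗ[ℝ] B →ₗ[ℝ] ℝ) (f : B → EReal) : Prop :=
  @LowerSemicontinuous B EReal (weakTop br) _ f

/-- `A` is `q`-representable: it has a `w(B,B)`-lsc proper convex `q`-representation. -/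
def IsQRepresentable (br : B →ₗ[ℝ] B →ₗ[ℝ] ℝ) (A : Set B) : Prop :=
  ∃ f : B → EReal, LscW br f ∧ ConvexE f ∧ (∃ x, f x ≠ ⊤) ∧
    (∀ x, ((qQ br x : ℝ) : EReal) ≤ f x) ∧ PqSet br f = A


section SSD

variable (br : B →ₗ[ℝ] B →ₗ[ℝ] ℝ)

lemma qQ_sub (hsym : ∀ x y : B, br x y = br y x) (x z : B) :
    qQ br (x - z) = qQ br x + qQ br z - br x z := by
  simp only [qQ, map_sub, LinearMap.sub_apply, hsym z x]
  ring

lemma coe_sub_qQ_le_PhiF {A : Set B} {a : B} (ha : a ∈ A) (c : B) :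
    ((br c a - qQ br a : ℝ) : EReal) ≤ PhiF br A c :=
  le_iSup₂ (f := fun a (_ : a ∈ A) => ((br c a - qQ br a : ℝ) : EReal)) a ha

lemma intrinsicConj_ne_top_iff {f : B → EReal} {b : B} :
    intrinsicConj br f b ≠ ⊤ ↔ ∃ r : ℝ, ∀ c, ((br c b : ℝ) : EReal) - f c ≤ r := by
  refine ⟨fun h => ⟨(intrinsicConj br f b).toReal, fun c => ?_⟩, fun ⟨r, hr⟩ => ?_⟩
  · exact (le_iSup (fun c => ((br c b : ℝ) : EReal) - f c) c).trans (EReal.le_coe_toReal h)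
  · exact ne_top_of_le_ne_top (EReal.coe_ne_top r) (iSup_le hr)

lemma convex_setOf_intrinsicConj_ne_top (f : B → EReal) :
    Convex ℝ {b | intrinsicConj br f b ≠ ⊤} := by
  intro b₁ hb₁ b₂ hb₂ α β hα hβ hαβ
  obtain ⟨r₁, h₁⟩ := (intrinsicConj_ne_top_iff br).1 hb₁
  obtain ⟨r₂, h₂⟩ := (intrinsicConj_ne_top_iff br).1 hb₂
  refine (intrinsicConj_ne_top_iff br).2 ⟨α * r₁ + β * r₂, fun c => ?_⟩
  have h₁ := h₁ c
  have h₂ := h₂ c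
  generalize f c = v at h₁ h₂ ⊢
  induction v using EReal.rec with
  | bot => simp at h₁
  | top => simp
  | coe p =>
    rw [← EReal.coe_sub, EReal.coe_le_coe_iff] at h₁ h₂ ⊢
    have hp : α * p + β * p = p := by rw [← add_mul, hαβ, one_mul]
    simp only [map_add, map_smul, smul_eq_mul]
    linarith [mul_le_mul_of_nonneg_left h₁ hα, mul_le_mul_of_nonneg_left h₂ hβ]

lemma intrinsicConj_PhiF_le_qQ {A : Set B} {a : B} (ha : a ∈ A) :
    intrinsicConj br (PhiF br A) a ≤ qQ br a :=
  iSup_le fun c => calc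
    ((br c a : ℝ) : EReal) - PhiF br A c
        ≤ ((br c a : ℝ) : EReal) - ((br c a - qQ br a : ℝ) : EReal) :=
          EReal.sub_le_sub le_rfl (coe_sub_qQ_le_PhiF br ha c)
    _ = qQ br a := by rw [← EReal.coe_sub, sub_sub_cancel]

lemma convexHull_subset_setOf_intrinsicConj_PhiF_ne_top (A : Set B) :
    convexHull ℝ A ⊆ {b | intrinsicConj br (PhiF br A) b ≠ ⊤} :=
  convexHull_min
    (fun _ ha => ne_top_of_le_ne_top (EReal.coe_ne_top _) (intrinsicConj_PhiF_le_qQ br ha))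
    (convex_setOf_intrinsicConj_ne_top br _)

lemma weakTop_eq_weakBilin : weakTop br = WeakBilin.instTopologicalSpace br := by
  simp only [weakTop, WeakBilin.instTopologicalSpace, Pi.topologicalSpace, induced_iInf,
    induced_compose]
  rfl

lemma exists_forall_lt_of_notMem_closure_weakTop {C : Set B} (hC : Convex ℝ C) {b : B}
    (hb : b ∉ @closure B (weakTop br) C) :
    ∃ y : B, ∃ u : ℝ, (∀ x ∈ C, br x y < u) ∧ u < br b y := by
  rw [weakTop_eq_weakBilin] at hb
  obtain ⟨f, u, hfC, hfb⟩ := geometric_hahn_banach_closed_point (E := WeakBilin br)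
    (hC.closure (E := WeakBilin br)) isClosed_closure hb
  obtain ⟨y, rfl⟩ := LinearMap.dualEmbedding_surjective br f
  exact ⟨y, u, fun x hx => hfC x (subset_closure hx), hfb⟩

lemma sub_qQ_le_qQ_of_mem_qPi (hsym : ∀ x y : B, br x y = br y x) {A : Set B} {a₀ a : B}
    (ha₀ : a₀ ∈ qPi br A) (ha : a ∈ A) : br a₀ a - qQ br a ≤ qQ br a₀ := by
  have h := ha₀ a ha
  rw [qQ_sub br hsym] at h
  linarith

lemma PhiF_add_smul_le (hsym : ∀ x y : B, br x y = br y x) {A : Set B} {a₀ y : B} {u t : ℝ}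
    (ha₀ : a₀ ∈ qPi br A) (hyu : ∀ a ∈ A, br a y ≤ u) (ht : 0 ≤ t) :
    PhiF br A (a₀ + t • y) ≤ ((qQ br a₀ + t * u : ℝ) : EReal) := by
  refine iSup₂_le fun a ha => EReal.coe_le_coe_iff.2 ?_
  have h₁ := sub_qQ_le_qQ_of_mem_qPi br hsym ha₀ ha
  have h₂ := mul_le_mul_of_nonneg_left (hyu a ha) ht
  simp only [map_add, map_smul, LinearMap.add_apply, LinearMap.smul_apply, smul_eq_mul, hsym y a]
  linarith

lemma le_intrinsicConj_PhiF (hsym : ∀ x y : B, br x y = br y x) {A : Set B} {a₀ y b : B}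
    {u t : ℝ} (ha₀ : a₀ ∈ qPi br A) (hyu : ∀ a ∈ A, br a y ≤ u) (ht : 0 ≤ t) :
    ((br a₀ b - qQ br a₀ + t * (br b y - u) : ℝ) : EReal) ≤ intrinsicConj br (PhiF br A) b :=
  calc ((br a₀ b - qQ br a₀ + t * (br b y - u) : ℝ) : EReal)
      = ((br (a₀ + t • y) b : ℝ) : EReal) - ((qQ br a₀ + t * u : ℝ) : EReal) := by
        rw [← EReal.coe_sub, EReal.coe_eq_coe_iff]
        simp only [map_add, map_smul, LinearMap.add_apply, LinearMap.smul_apply, smul_eq_mul,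
          hsym y b]
        ring
    _ ≤ ((br (a₀ + t • y) b : ℝ) : EReal) - PhiF br A (a₀ + t • y) :=
        EReal.sub_le_sub le_rfl (PhiF_add_smul_le br hsym ha₀ hyu ht)
    _ ≤ intrinsicConj br (PhiF br A) b :=
        le_iSup (fun c => ((br c b : ℝ) : EReal) - PhiF br A c) _

lemma intrinsicConj_PhiF_eq_top (hsym : ∀ x y : B, br x y = br y x) {A : Set B} {a₀ y b : B}
    {u : ℝ} (ha₀ : a₀ ∈ qPi br A) (hyu : ∀ a ∈ A, br a y ≤ u) (hub : u < br b y) :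
    intrinsicConj br (PhiF br A) b = ⊤ := by
  refine (EReal.eq_top_iff_forall_lt _).2 fun r => ?_
  set k := br a₀ b - qQ br a₀
  have hd : 0 < br b y - u := sub_pos.2 hub
  refine lt_of_lt_of_le ?_
    (le_intrinsicConj_PhiF br hsym ha₀ hyu (t := (|r - k| + 1) / (br b y - u)) (by positivity))
  rw [EReal.coe_lt_coe_iff, div_mul_cancel₀ _ hd.ne']
  linarith [le_abs_self (r - k)]

end SSD

theorem stmt5_general (br : B →ₗ[ℝ] B →ₗ[ℝ] ℝ)
    (hsym : ∀ x y : B, br x y = br y x)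
    (A : Set B) (hA : IsQPositive br A) :
    convexHull ℝ A ⊆ {b : B | intrinsicConj br (PhiF br A) b ≠ ⊤} ∧
    {b : B | intrinsicConj br (PhiF br A) b ≠ ⊤} ⊆
      @closure B (weakTop br) (convexHull ℝ A) := by
  refine ⟨convexHull_subset_setOf_intrinsicConj_PhiF_ne_top br A, fun b hb => ?_⟩
  by_contra hcl
  obtain ⟨y, u, hCy, hub⟩ :=
    exists_forall_lt_of_notMem_closure_weakTop br (convex_convexHull ℝ A) hcl
  obtain ⟨a₀, ha₀⟩ := hA.1
  exact hb (intrinsicConj_PhiF_eq_top br hsym (hA.2 a₀ ha₀)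
    (fun a ha => (hCy a (subset_convexHull ℝ A ha)).le) hub)

/-- conv A ⊆ dom Φ_A^@ ⊆ cl_w(conv A). -/
theorem stmt5 [Nontrivial B] (br : B →ₗ[ℝ] B →ₗ[ℝ] ℝ)
    (hsym : ∀ x y : B, br x y = br y x)
    (A : Set B) (hA : IsQPositive br A) :
    convexHull ℝ A ⊆ {b : B | intrinsicConj br (PhiF br A) b ≠ ⊤} ∧
    {b : B | intrinsicConj br (PhiF br A) b ≠ ⊤} ⊆
      @closure B (weakTop br) (convexHull ℝ A) :=
  stmt5_general br hsym A hA
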